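/- arXiv:1902.06496 — 4 statements merged into one kernel-verified Lean document; each statement's English description precedes it below -/
import Mathlib

section
/- Let A be a real n×n matrix that is Hurwitz stable, i.e. every complex eigenvalue of A has negative real part. Then the linear map X ↦ A X + X Aᵀ on real n×n matrices is injective: if A X + X Aᵀ = 0 then X = 0. Consequently, for every real n×n matrix F the Lyapunov equation A J + J Aᵀ = −F has at most one solution J. -/
/-!
If `A X = X N`, then `p(A) X = X p(N)` for every polynomial `p`; taking `p = χ_A` gives
`X χ_A(N) = 0`. When `χ_A` and `χ_N` are coprime, `χ_A(N)` is invertible (Bézout, together with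
`χ_N(N) = 0`), so `X = 0`. For `A X + X Aᵀ = 0` take `N = -Aᵀ`, whose eigenvalues are the
negatives of those of `A`: a common eigenvalue `μ` would give `Re μ < 0` and `Re (-μ) < 0`.
-/

open Matrix Polynomial

theorem SemiconjBy.aeval {R A : Type*} [CommSemiring R] [Semiring A] [Algebra R A] {a x y : A}
    (h : SemiconjBy a x y) (p : R[X]) : SemiconjBy a (aeval x p) (aeval y p) := by
  induction p using Polynomial.induction_on' with
  | add p q hp hq => simpa only [map_add] using hp.add_right hq
  | monomial k c =>
    simpa only [aeval_monomial] using
      SemiconjBy.mul_right (Algebra.commute_algebraMap_left c a).symm (h.pow_right k)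

namespace Matrix

variable {R : Type*} [CommRing R] {n : Type*} [Fintype n] [DecidableEq n]

theorem eq_zero_of_mul_eq_mul_of_isCoprime_charpoly {M N Y : Matrix n n R} (h : M * Y = Y * N)
    (hMN : IsCoprime M.charpoly N.charpoly) : Y = 0 := by
  obtain ⟨a, b, hab⟩ := hMN
  have hY : Y * aeval N M.charpoly = 0 := by
    rw [(SemiconjBy.aeval h.symm M.charpoly).eq, aeval_self_charpoly, zero_mul]
  -- `N` kills `N.charpoly`, so `aeval N a` inverts `aeval N M.charpoly`.
  have hinv : aeval N M.charpoly * aeval N a = 1 := by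
    simpa [aeval_self_charpoly, mul_comm a] using congrArg (aeval N) hab
  rw [← mul_one Y, ← hinv, ← mul_assoc, hY, zero_mul]

theorem eval_charpoly_neg (M : Matrix n n R) (t : R) :
    eval t (-M).charpoly = (-1) ^ Fintype.card n * eval (-t) M.charpoly := by
  rw [eval_charpoly, eval_charpoly, ← det_neg]
  congr 1
  simp [sub_eq_add_neg, add_comm]

theorem isCoprime_charpoly_neg_transpose_of_re_neg {A : Matrix n n ℝ}
    (hA : ∀ μ : ℂ, (A.map Complex.ofReal).charpoly.IsRoot μ → μ.re < 0) :
    IsCoprime A.charpoly (-Aᵀ).charpoly := by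
  have haeval (B : Matrix n n ℝ) (μ : ℂ) :
      aeval μ B.charpoly = eval μ (B.map Complex.ofReal).charpoly := by
    rw [aeval_def, eval₂_eq_eval_map, ← charpoly_map]; rfl
  refine (isCoprime_iff_aeval_ne_zero_of_isAlgClosed ℝ ℂ _ _).mpr fun μ => ?_
  by_contra! ⟨hroot, hroot_neg⟩
  rw [haeval, Matrix.map_neg _ Complex.ofReal_neg, transpose_map, eval_charpoly_neg,
    charpoly_transpose, mul_eq_zero, or_iff_right (pow_ne_zero _ (neg_ne_zero.mpr one_ne_zero))]
    at hroot_neg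
  have hre := hA μ ((haeval A μ).symm.trans hroot)
  have hre_neg := hA (-μ) hroot_neg
  rw [Complex.neg_re] at hre_neg
  linarith

end Matrix

/-- For a Hurwitz stable real matrix `A`, the Lyapunov operator
`X ↦ A X + X Aᵀ` is injective; consequently, for every `F` the Lyapunov equation
`A J + J Aᵀ = −F` has at most one solution. -/
theorem lyapunov_uniqueness
    (n : ℕ) (A : Matrix (Fin n) (Fin n) ℝ)
    (hA : ∀ μ : ℂ, (A.map Complex.ofReal).charpoly.IsRoot μ → μ.re < 0) :
    (∀ X : Matrix (Fin n) (Fin n) ℝ, A * X + X * Aᵀ = 0 → X = 0) ∧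
    ∀ F J J' : Matrix (Fin n) (Fin n) ℝ,
      A * J + J * Aᵀ = -F → A * J' + J' * Aᵀ = -F → J = J' := by
  have hinj (X : Matrix (Fin n) (Fin n) ℝ) (hX : A * X + X * Aᵀ = 0) : X = 0 :=
    eq_zero_of_mul_eq_mul_of_isCoprime_charpoly
      (by rw [mul_neg]; exact eq_neg_of_add_eq_zero_left hX)
      (isCoprime_charpoly_neg_transpose_of_re_neg hA)
  refine ⟨hinj, fun F J J' hJ hJ' => sub_eq_zero.mp (hinj _ ?_)⟩
  rw [mul_sub, sub_mul, sub_add_sub_comm, hJ, hJ', sub_self]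
end

section
/- Let d be a positive integer and let Γ₁ = diag(λ₁,…,λ_d) and Γ₂ = diag(μ₁,…,μ_d) be real diagonal d×d matrices with 0 < λ_j < μ_j for each j. Let Γ = diag(Γ₁, Γ₂) ∈ ℝ^{2d×2d} be the block-diagonal matrix, let Σ ∈ ℝ^{2d×d} be the block matrix with upper block −Γ₁Γ₂(Γ₂−Γ₁)^{−1} and lower block Γ₂²(Γ₂−Γ₁)^{−1}, and let M ∈ ℝ^{2d×2d} be the symmetric block matrix with blocks M¹¹ = ½Γ₁Γ₂²(Γ₁−Γ₂)^{−2}, M¹² = M²¹ = −Γ₁Γ₂³(Γ₁+Γ₂)^{−1}(Γ₁−Γ₂)^{−2}, and M²² = ½Γ₂³(Γ₁−Γ₂)^{−2}. Then M satisfies the Lyapunov equation Γ M + M Γᵀ = Σ Σᵀ. -/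
/-!
All blocks of `Γ`, `Σ` and `M` are diagonal, so the Lyapunov equation decouples coordinate by
coordinate into the scalar identities `(γ + γ') m = σ σ'` with `γ, γ' ∈ {λⱼ, μⱼ}`. These follow by
clearing the denominators `λⱼ - μⱼ` and `λⱼ + μⱼ`, which are nonzero because `0 < λⱼ < μⱼ`.
-/

open Matrix

section

variable {n α : Type*} [Fintype n] [DecidableEq n]

theorem inv_diagonal_of_ne_zero {K : Type*} [Field K] {v : n → K} (hv : ∀ i, v i ≠ 0) :
    (diagonal v)⁻¹ = diagonal fun i => (v i)⁻¹ :=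
  inv_eq_right_inv <| by rw [diagonal_mul_diagonal]; simp [hv]

variable [CommRing α]

theorem fromBlocks_diagonal_mul_add_mul_transpose (a b p q q' r : n → α) :
    fromBlocks (diagonal a) 0 0 (diagonal b) *
        fromBlocks (diagonal p) (diagonal q) (diagonal q') (diagonal r) +
      fromBlocks (diagonal p) (diagonal q) (diagonal q') (diagonal r) *
        (fromBlocks (diagonal a) 0 0 (diagonal b))ᵀ =
    fromBlocks (diagonal fun i => 2 * a i * p i) (diagonal fun i => (a i + b i) * q i)
      (diagonal fun i => (a i + b i) * q' i) (diagonal fun i => 2 * b i * r i) := by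
  simp only [fromBlocks_transpose, diagonal_transpose, transpose_zero, fromBlocks_multiply,
    fromBlocks_add, diagonal_mul_diagonal, Matrix.zero_mul, Matrix.mul_zero, add_zero, zero_add,
    diagonal_add]
  congr 2 <;> funext i <;> ring

theorem fromRows_diagonal_mul_transpose (s t : n → α) :
    fromRows (diagonal s) (diagonal t) * (fromRows (diagonal s) (diagonal t))ᵀ =
      fromBlocks (diagonal fun i => s i ^ 2) (diagonal fun i => s i * t i)
        (diagonal fun i => s i * t i) (diagonal fun i => t i ^ 2) := by
  simp only [transpose_fromRows, fromRows_mul_fromCols, diagonal_transpose, diagonal_mul_diagonal]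
  congr 2 <;> funext i <;> ring

end

theorem block_gramian_lyapunov_general
    (d : ℕ) (lam mu : Fin d → ℝ)
    (hpos : ∀ j, 0 < lam j) (hlt : ∀ j, lam j < mu j)
    (Γ₁ Γ₂ : Matrix (Fin d) (Fin d) ℝ)
    (hΓ₁ : Γ₁ = Matrix.diagonal lam) (hΓ₂ : Γ₂ = Matrix.diagonal mu)
    (Γ : Matrix (Fin d ⊕ Fin d) (Fin d ⊕ Fin d) ℝ)
    (hΓ : Γ = Matrix.fromBlocks Γ₁ 0 0 Γ₂)
    (Sig : Matrix (Fin d ⊕ Fin d) (Fin d) ℝ)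
    (hSig : Sig = Matrix.fromRows (-(Γ₁ * Γ₂ * (Γ₂ - Γ₁)⁻¹)) (Γ₂ ^ 2 * (Γ₂ - Γ₁)⁻¹))
    (M : Matrix (Fin d ⊕ Fin d) (Fin d ⊕ Fin d) ℝ)
    (hM : M = Matrix.fromBlocks
      ((1 / 2 : ℝ) • (Γ₁ * Γ₂ ^ 2 * ((Γ₁ - Γ₂)⁻¹) ^ 2))
      (-(Γ₁ * Γ₂ ^ 3 * (Γ₁ + Γ₂)⁻¹ * ((Γ₁ - Γ₂)⁻¹) ^ 2))
      (-(Γ₁ * Γ₂ ^ 3 * (Γ₁ + Γ₂)⁻¹ * ((Γ₁ - Γ₂)⁻¹) ^ 2))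
      ((1 / 2 : ℝ) • (Γ₂ ^ 3 * ((Γ₁ - Γ₂)⁻¹) ^ 2))) :
    Γ * M + M * Γᵀ = Sig * Sigᵀ := by
  subst hΓ₁ hΓ₂ hΓ hSig hM
  have hsub : ∀ j, mu j - lam j ≠ 0 := fun j => sub_ne_zero.2 (hlt j).ne'
  have hsub' : ∀ j, lam j - mu j ≠ 0 := fun j => sub_ne_zero.2 (hlt j).ne
  have hadd : ∀ j, lam j + mu j ≠ 0 := fun j => (add_pos (hpos j) ((hpos j).trans (hlt j))).ne'
  simp only [diagonal_sub, diagonal_add, inv_diagonal_of_ne_zero hsub,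
    inv_diagonal_of_ne_zero hsub', inv_diagonal_of_ne_zero hadd, diagonal_pow,
    diagonal_mul_diagonal, ← diagonal_smul, diagonal_neg, Pi.pow_apply]
  rw [fromBlocks_diagonal_mul_add_mul_transpose, fromRows_diagonal_mul_transpose]
  simp only [Pi.smul_apply, smul_eq_mul]
  congr 2 <;> funext j <;> field_simp [hsub j, hsub' j, hadd j] <;> ring

/-- The block matrix `M` with blocks `M¹¹ = ½Γ₁Γ₂²(Γ₁−Γ₂)⁻²`,
`M¹² = M²¹ = −Γ₁Γ₂³(Γ₁+Γ₂)⁻¹(Γ₁−Γ₂)⁻²`, `M²² = ½Γ₂³(Γ₁−Γ₂)⁻²` solves the Lyapunov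
equation `ΓM + MΓᵀ = ΣΣᵀ` for `Γ = diag(Γ₁,Γ₂)` and `Σ` with blocks
`−Γ₁Γ₂(Γ₂−Γ₁)⁻¹` and `Γ₂²(Γ₂−Γ₁)⁻¹`, where `Γ₁ = diag(λ)`, `Γ₂ = diag(μ)` with
`0 < λⱼ < μⱼ`. -/
theorem block_gramian_lyapunov
    (d : ℕ) (hd : 0 < d) (lam mu : Fin d → ℝ)
    (hpos : ∀ j, 0 < lam j) (hlt : ∀ j, lam j < mu j)
    (Γ₁ Γ₂ : Matrix (Fin d) (Fin d) ℝ)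
    (hΓ₁ : Γ₁ = Matrix.diagonal lam) (hΓ₂ : Γ₂ = Matrix.diagonal mu)
    (Γ : Matrix (Fin d ⊕ Fin d) (Fin d ⊕ Fin d) ℝ)
    (hΓ : Γ = Matrix.fromBlocks Γ₁ 0 0 Γ₂)
    (Sig : Matrix (Fin d ⊕ Fin d) (Fin d) ℝ)
    (hSig : Sig = Matrix.fromRows (-(Γ₁ * Γ₂ * (Γ₂ - Γ₁)⁻¹)) (Γ₂ ^ 2 * (Γ₂ - Γ₁)⁻¹))
    (M : Matrix (Fin d ⊕ Fin d) (Fin d ⊕ Fin d) ℝ)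
    (hM : M = Matrix.fromBlocks
      ((1 / 2 : ℝ) • (Γ₁ * Γ₂ ^ 2 * ((Γ₁ - Γ₂)⁻¹) ^ 2))
      (-(Γ₁ * Γ₂ ^ 3 * (Γ₁ + Γ₂)⁻¹ * ((Γ₁ - Γ₂)⁻¹) ^ 2))
      (-(Γ₁ * Γ₂ ^ 3 * (Γ₁ + Γ₂)⁻¹ * ((Γ₁ - Γ₂)⁻¹) ^ 2))
      ((1 / 2 : ℝ) • (Γ₂ ^ 3 * ((Γ₁ - Γ₂)⁻¹) ^ 2))) :
    Γ * M + M * Γᵀ = Sig * Sigᵀ :=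
  block_gramian_lyapunov_general d lam mu hpos hlt Γ₁ Γ₂ hΓ₁ hΓ₂ Γ hΓ Sig hSig M hM
end

section
/- Let d, p be positive integers, let Γ₁ = diag(λ₁,…,λ_d) and Γ₂ = diag(μ₁,…,μ_d) be real diagonal d×d matrices with 0 < λ_j < μ_j for each j, and let B be a real p×d matrix. Let Γ = diag(Γ₁, Γ₂) ∈ ℝ^{2d×2d}, C = [B B] ∈ ℝ^{p×2d}, and let M ∈ ℝ^{2d×2d} be the symmetric block matrix with blocks M¹¹ = ½Γ₁Γ₂²(Γ₁−Γ₂)^{−2}, M¹² = M²¹ = −Γ₁Γ₂³(Γ₁+Γ₂)^{−1}(Γ₁−Γ₂)^{−2}, M²² = ½Γ₂³(Γ₁−Γ₂)^{−2}. Then for every t ∈ ℝ, C exp(−|t|Γ) M Cᵀ = ½ B Γ₂²(Γ₂² − Γ₁²)^{−1}(Γ₂ e^{−Γ₂|t|} − Γ₁ e^{−Γ₁|t|}) Bᵀ, where e^{−Γ_i|t|} denotes the matrix exponential of −|t|Γ_i. -/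
/-!
Since `C = [B B]` and `Γ` is block diagonal, the kernel collapses to
`B (E₁ (M¹¹ + M¹²) + E₂ (M²¹ + M²²)) Bᵀ` with `Eᵢ = exp(−|t|Γᵢ)`. All remaining matrices are
diagonal, so the claim is coordinatewise a partial-fraction identity: for `a = λⱼ`, `b = μⱼ`,
`½ab²/(a−b)² − ab³/((a+b)(a−b)²) = −½ab²/(b²−a²)` and `½b³/(a−b)² − ab³/((a+b)(a−b)²) = ½b³/(b²−a²)`.
-/

open Matrix

namespace Matrix

variable {n : Type*} [Fintype n] [DecidableEq n]

theorem inv_diagonal_of_ne_zero {K : Type*} [Field K] {v : n → K} (hv : ∀ i, v i ≠ 0) :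
    (diagonal v)⁻¹ = diagonal v⁻¹ := by
  refine inv_eq_right_inv ?_
  rw [diagonal_mul_diagonal, ← diagonal_one]
  exact congrArg diagonal (funext fun i => mul_inv_cancel₀ (hv i))

theorem exp_smul_diagonal (s : ℝ) (v : n → ℝ) :
    NormedSpace.exp (s • diagonal v) = diagonal fun i => Real.exp (s * v i) := by
  rw [← diagonal_smul, exp_diagonal, Pi.exp_def, Real.exp_eq_exp_ℝ]
  rfl

theorem exp_smul_fromBlocks_diagonal {m : Type*} [Fintype m] [DecidableEq m]
    (s : ℝ) (v : n → ℝ) (w : m → ℝ) :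
    NormedSpace.exp (s • fromBlocks (diagonal v) 0 0 (diagonal w)) =
      fromBlocks (NormedSpace.exp (s • diagonal v)) 0 0 (NormedSpace.exp (s • diagonal w)) := by
  rw [fromBlocks_diagonal, exp_smul_diagonal, exp_smul_diagonal, exp_smul_diagonal,
    fromBlocks_diagonal]
  congr 1
  funext i
  cases i <;> rfl

omit [DecidableEq n] in
theorem fromCols_self_mul_fromBlocks_mul_fromBlocks_mul_transpose {p R : Type*} [Semiring R]
    (B : Matrix p n R) (E₁ E₂ M₁₁ M₁₂ M₂₁ M₂₂ : Matrix n n R) :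
    fromCols B B * fromBlocks E₁ 0 0 E₂ * fromBlocks M₁₁ M₁₂ M₂₁ M₂₂ * (fromCols B B)ᵀ =
      B * (E₁ * (M₁₁ + M₁₂) + E₂ * (M₂₁ + M₂₂)) * Bᵀ := by
  rw [fromCols_mul_fromBlocks, fromCols_mul_fromBlocks, transpose_fromCols, fromCols_mul_fromRows]
  simp only [Matrix.mul_zero, add_zero, zero_add, Matrix.mul_add, Matrix.add_mul,
    Matrix.mul_assoc]
  abel

theorem gramian_blocks_diagonal_identity {lam mu x y : n → ℝ}
    (hne : ∀ j, lam j ≠ mu j) (hadd : ∀ j, lam j + mu j ≠ 0)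
    (Γ₁ Γ₂ E₁ E₂ : Matrix n n ℝ) (hΓ₁ : Γ₁ = diagonal lam) (hΓ₂ : Γ₂ = diagonal mu)
    (hE₁ : E₁ = diagonal x) (hE₂ : E₂ = diagonal y) :
    E₁ * ((1 / 2 : ℝ) • (Γ₁ * Γ₂ ^ 2 * ((Γ₁ - Γ₂)⁻¹) ^ 2) +
        -(Γ₁ * Γ₂ ^ 3 * (Γ₁ + Γ₂)⁻¹ * ((Γ₁ - Γ₂)⁻¹) ^ 2)) +
      E₂ * (-(Γ₁ * Γ₂ ^ 3 * (Γ₁ + Γ₂)⁻¹ * ((Γ₁ - Γ₂)⁻¹) ^ 2) +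
        (1 / 2 : ℝ) • (Γ₂ ^ 3 * ((Γ₁ - Γ₂)⁻¹) ^ 2)) =
    (1 / 2 : ℝ) • (Γ₂ ^ 2 * (Γ₂ ^ 2 - Γ₁ ^ 2)⁻¹ * (Γ₂ * E₂ - Γ₁ * E₁)) := by
  have hsub : ∀ j, lam j - mu j ≠ 0 := fun j => sub_ne_zero.2 (hne j)
  have hsq : ∀ j, mu j ^ 2 - lam j ^ 2 ≠ 0 := fun j => by
    rw [sq_sub_sq, add_comm]
    exact mul_ne_zero (hadd j) (sub_ne_zero.2 (hne j).symm)
  subst hΓ₁ hΓ₂ hE₁ hE₂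
  simp only [diagonal_pow, diagonal_sub, diagonal_add]
  rw [inv_diagonal_of_ne_zero hsub, inv_diagonal_of_ne_zero hadd,
    inv_diagonal_of_ne_zero (v := fun j => (mu ^ 2) j - (lam ^ 2) j) hsq]
  simp only [diagonal_pow, diagonal_mul_diagonal, ← diagonal_smul, diagonal_neg, diagonal_add,
    diagonal_sub]
  congr 1
  funext j
  simp only [Pi.smul_apply, Pi.pow_apply, Pi.inv_apply, smul_eq_mul]
  field_simp [hsub j, hadd j, hsq j]
  ring

end Matrix

/-- Bi-exponential closed form of the memory kernel realized by the
triple `(Γ, M, C)` with `Γ = diag(Γ₁,Γ₂)`, `C = [B B]` and the Gramian `M`: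
`C exp(−|t|Γ) M Cᵀ = ½ B Γ₂²(Γ₂² − Γ₁²)⁻¹(Γ₂e^{−Γ₂|t|} − Γ₁e^{−Γ₁|t|}) Bᵀ`. -/
theorem block_kernel_biexponential_form
    (d p : ℕ) (lam mu : Fin d → ℝ)
    (hpos : ∀ j, 0 < lam j) (hlt : ∀ j, lam j < mu j)
    (B : Matrix (Fin p) (Fin d) ℝ)
    (Γ₁ Γ₂ : Matrix (Fin d) (Fin d) ℝ)
    (hΓ₁ : Γ₁ = Matrix.diagonal lam) (hΓ₂ : Γ₂ = Matrix.diagonal mu)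
    (Γ : Matrix (Fin d ⊕ Fin d) (Fin d ⊕ Fin d) ℝ)
    (hΓ : Γ = Matrix.fromBlocks Γ₁ 0 0 Γ₂)
    (C : Matrix (Fin p) (Fin d ⊕ Fin d) ℝ)
    (hC : C = Matrix.fromCols B B)
    (M : Matrix (Fin d ⊕ Fin d) (Fin d ⊕ Fin d) ℝ)
    (hM : M = Matrix.fromBlocks
      ((1 / 2 : ℝ) • (Γ₁ * Γ₂ ^ 2 * ((Γ₁ - Γ₂)⁻¹) ^ 2))
      (-(Γ₁ * Γ₂ ^ 3 * (Γ₁ + Γ₂)⁻¹ * ((Γ₁ - Γ₂)⁻¹) ^ 2))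
      (-(Γ₁ * Γ₂ ^ 3 * (Γ₁ + Γ₂)⁻¹ * ((Γ₁ - Γ₂)⁻¹) ^ 2))
      ((1 / 2 : ℝ) • (Γ₂ ^ 3 * ((Γ₁ - Γ₂)⁻¹) ^ 2))) :
    ∀ t : ℝ,
      C * NormedSpace.exp ((-|t|) • Γ) * M * Cᵀ =
        (1 / 2 : ℝ) • (B * Γ₂ ^ 2 * (Γ₂ ^ 2 - Γ₁ ^ 2)⁻¹ *
          (Γ₂ * NormedSpace.exp ((-|t|) • Γ₂) - Γ₁ * NormedSpace.exp ((-|t|) • Γ₁)) *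
          Bᵀ) := by
  intro t
  have hne : ∀ j, lam j ≠ mu j := fun j => (hlt j).ne
  have hadd : ∀ j, lam j + mu j ≠ 0 := fun j =>
    (add_pos (hpos j) ((hpos j).trans (hlt j))).ne'
  have hexp : NormedSpace.exp ((-|t|) • Γ) =
      fromBlocks (NormedSpace.exp ((-|t|) • Γ₁)) 0 0 (NormedSpace.exp ((-|t|) • Γ₂)) := by
    rw [hΓ, hΓ₁, hΓ₂, exp_smul_fromBlocks_diagonal]
  rw [hC, hexp, hM, fromCols_self_mul_fromBlocks_mul_fromBlocks_mul_transpose,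
    gramian_blocks_diagonal_identity hne hadd Γ₁ Γ₂ _ _ hΓ₁ hΓ₂
      (by rw [hΓ₁, exp_smul_diagonal]) (by rw [hΓ₂, exp_smul_diagonal])]
  simp only [Matrix.mul_smul, Matrix.smul_mul, Matrix.mul_assoc]
end

section
/- Let β, φ, m₀, γ₂, Γ₁ > 0 be constants and let σ, h : ℝ → ℝ be differentiable functions with σ(x) ≠ 0 and h(x) ≠ 0 for all x ∈ ℝ, and set g := φσ. Define, for x ∈ ℝ, S₁(x) := (2/β²)·(d/dx)(1/(g h))(x)·σ(x)²/(g(x)h(x)) − (d/dx)(1/h)(x)·4σ(x)²/(g(x)(g(x)h(x)β² + 4m₀γ₂)) + (d/dx)(σ/(g h))(x)·4σ(x)/(β²g(x)h(x) + 4m₀γ₂), and S₂(x) := −(Γ₁/β)·(d/dx)(1/g)(x)·σ(x)²/(g(x)h(x)) − (d/dx)(σ/g)(x)·2Γ₁βσ(x)/(β²g(x)h(x) + 4m₀γ₂). Then for all x ∈ ℝ, S₁(x) = (2/β²)·(d/dx)(1/(g h))(x)·σ(x)²/(g(x)h(x)) and S₂(x) = −(Γ₁/β)·(d/dx)(1/g)(x)·σ(x)²/(g(x)h(x));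 i.e. the last two terms of S₁ cancel and the last term of S₂ vanishes, so that S₁ and S₂ do not depend on m₀ or γ₂. -/
/-!
Since `g = φσ` with `σ` nowhere zero, `σ / g` is the constant `φ⁻¹` and
`σ / (g h) = φ⁻¹ · (1 / h)`. Hence the last term of `S₂` carries the factor `(σ / g)' = 0`,
and the last term of `S₁` becomes `φ⁻¹ (1/h)' · 4σ / (β² g h + 4 m₀ γ₂)`, which is the
middle term `(1/h)' · 4σ² / (g (g h β² + 4 m₀ γ₂))` after cancelling one factor `σ`
against `g = φσ`.
-/

section

variable {𝕜 : Type*} [NontriviallyNormedField 𝕜] {f : 𝕜 → 𝕜}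

theorem deriv_div_const_mul_self (hf : ∀ y, f y ≠ 0) (c x : 𝕜) :
    deriv (fun y => f y / (c * f y)) x = 0 := by
  simp only [div_mul_cancel_right₀ (hf _), deriv_const]

theorem deriv_div_const_mul_self_mul (hf : ∀ y, f y ≠ 0) (c : 𝕜) (k : 𝕜 → 𝕜) (x : 𝕜) :
    deriv (fun y => f y / (c * f y * k y)) x = c⁻¹ * deriv (fun y => 1 / k y) x := by
  simp only [mul_comm c, mul_assoc, ← div_div, div_self (hf _), deriv_div_const]
  exact div_eq_inv_mul _ _

end

theorem drift_terms_simplify_general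
    (β φ m₀ γ₂ Γ₁ : ℝ)
    (σ h : ℝ → ℝ)
    (hσ : ∀ x, σ x ≠ 0)
    (g : ℝ → ℝ) (hg : g = fun x => φ * σ x)
    (S₁ S₂ : ℝ → ℝ)
    (hS₁ : S₁ = fun x =>
      (2 / β ^ 2) * deriv (fun y => 1 / (g y * h y)) x * (σ x ^ 2 / (g x * h x))
        - deriv (fun y => 1 / h y) x *
            (4 * σ x ^ 2 / (g x * (g x * h x * β ^ 2 + 4 * m₀ * γ₂)))
        + deriv (fun y => σ y / (g y * h y)) x *
            (4 * σ x / (β ^ 2 * g x * h x + 4 * m₀ * γ₂)))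
    (hS₂ : S₂ = fun x =>
      -(Γ₁ / β) * deriv (fun y => 1 / g y) x * (σ x ^ 2 / (g x * h x))
        - deriv (fun y => σ y / g y) x *
            (2 * Γ₁ * β * σ x / (β ^ 2 * g x * h x + 4 * m₀ * γ₂))) :
    ∀ x : ℝ,
      S₁ x = (2 / β ^ 2) * deriv (fun y => 1 / (g y * h y)) x * (σ x ^ 2 / (g x * h x)) ∧
      S₂ x = -(Γ₁ / β) * deriv (fun y => 1 / g y) x * (σ x ^ 2 / (g x * h x)) := by
  intro x
  subst hg hS₁ hS₂
  beta_reduce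
  have hσ_cancel (E : ℝ) : σ x ^ 2 / (φ * σ x * E) = σ x / E / φ := by
    rw [sq, show φ * σ x * E = σ x * (E * φ) by ring, mul_div_mul_left _ _ (hσ x), div_div]
  refine ⟨?_, ?_⟩
  · rw [deriv_div_const_mul_self_mul hσ, mul_div_assoc 4,
      hσ_cancel (φ * σ x * h x * β ^ 2 + 4 * m₀ * γ₂)]
    ring
  · rw [deriv_div_const_mul_self hσ]
    ring

/-- When `g = φσ` (so in particular under the fluctuation–dissipation
relation), the drift correction terms `S₁`, `S₂` of the homogenized SDE simplify: the
last two terms of `S₁` cancel and the last term of `S₂` vanishes, so `S₁` and `S₂` do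
not depend on `m₀` or `γ₂`. -/
theorem drift_terms_simplify
    (β φ m₀ γ₂ Γ₁ : ℝ) (hβ : 0 < β) (hφ : 0 < φ) (hm₀ : 0 < m₀) (hγ₂ : 0 < γ₂)
    (hΓ₁ : 0 < Γ₁)
    (σ h : ℝ → ℝ) (hσd : Differentiable ℝ σ) (hhd : Differentiable ℝ h)
    (hσ : ∀ x, σ x ≠ 0) (hh : ∀ x, h x ≠ 0)
    (g : ℝ → ℝ) (hg : g = fun x => φ * σ x)
    (hD : ∀ x, β ^ 2 * g x * h x + 4 * m₀ * γ₂ ≠ 0)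
    (S₁ S₂ : ℝ → ℝ)
    (hS₁ : S₁ = fun x =>
      (2 / β ^ 2) * deriv (fun y => 1 / (g y * h y)) x * (σ x ^ 2 / (g x * h x))
        - deriv (fun y => 1 / h y) x *
            (4 * σ x ^ 2 / (g x * (g x * h x * β ^ 2 + 4 * m₀ * γ₂)))
        + deriv (fun y => σ y / (g y * h y)) x *
            (4 * σ x / (β ^ 2 * g x * h x + 4 * m₀ * γ₂)))
    (hS₂ : S₂ = fun x =>
      -(Γ₁ / β) * deriv (fun y => 1 / g y) x * (σ x ^ 2 / (g x * h x))
        - deriv (fun y => σ y / g y) x *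
            (2 * Γ₁ * β * σ x / (β ^ 2 * g x * h x + 4 * m₀ * γ₂))) :
    ∀ x : ℝ,
      S₁ x = (2 / β ^ 2) * deriv (fun y => 1 / (g y * h y)) x * (σ x ^ 2 / (g x * h x)) ∧
      S₂ x = -(Γ₁ / β) * deriv (fun y => 1 / g y) x * (σ x ^ 2 / (g x * h x)) :=
  drift_terms_simplify_general β φ m₀ γ₂ Γ₁ σ h hσ g hg S₁ S₂ hS₁ hS₂
end
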